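/- arXiv:2211.02685 — 2 statements merged into one kernel-verified Lean document; each statement's English description precedes it below -/
import Mathlib

section
/- For the d-dimensional depolarizing channel D_λ with λ < 0, applied to a pure state |ψ⟩ with mean energy E = ⟨ψ|H|ψ⟩ where H has eigenvalues 0 = ε₁ ≤ ... ≤ ε_d = 1, the ergotropy of the output state equals |λ|·(1 − E). -/
open Matrix BigOperators

/-- Mean energy `Tr[ρH]` (real part). -/
noncomputable def energy {ι : Type*} [Fintype ι] (ρ H : Matrix ι ι ℂ) : ℝ :=
  (Matrix.trace (ρ * H)).re

/-- Minimum of `Tr[UρU†H]` over all unitaries `U`. -/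
noncomputable def minEnergy {ι : Type*} [Fintype ι] [DecidableEq ι]
    (ρ H : Matrix ι ι ℂ) : ℝ :=
  sInf {x | ∃ U ∈ Matrix.unitaryGroup ι ℂ, x = energy (U * ρ * star U) H}

/-- Ergotropy `ℰ(ρ;H) = Tr[ρH] − min_U Tr[UρU†H]`. -/
noncomputable def ergotropy {ι : Type*} [Fintype ι] [DecidableEq ι]
    (ρ H : Matrix ι ι ℂ) : ℝ :=
  energy ρ H - minEnergy ρ H

/-- The `d`-dimensional depolarizing channel `D_λ(ρ) = λρ + (1−λ)Tr[ρ]·(I/d)`. -/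
noncomputable def depol (d : ℕ) (l : ℝ) (ρ : Matrix (Fin d) (Fin d) ℂ) :
    Matrix (Fin d) (Fin d) ℂ :=
  (l : ℂ) • ρ + (((1 - l) / d : ℝ) : ℂ) • Matrix.trace ρ • (1 : Matrix (Fin d) (Fin d) ℂ)

/-- The rank-one projector `|ψ⟩⟨ψ|` onto a pure state `ψ`. -/
noncomputable def pureProj (d : ℕ) (ψ : Fin d → ℂ) : Matrix (Fin d) (Fin d) ℂ :=
  Matrix.of fun i j => ψ i * star (ψ j)

/-! Unitary conjugation commutes with the depolarizing channel and sends `|ψ⟩⟨ψ|` to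
`|Uψ⟩⟨Uψ|`, so the energy of the rotated output is `λ ⟨Uψ|H|Uψ⟩ + (1 - λ) Tr H / d`.
Since `λ ≤ 0` this is minimised by maximising `⟨Uψ|H|Uψ⟩ ≤ max ε = 1`, and the maximum is
attained by a unitary rotating `ψ` onto the top eigenvector of `H`. -/

theorem pureProj_eq_vecMulVec (d : ℕ) (ψ : Fin d → ℂ) : pureProj d ψ = vecMulVec ψ (star ψ) :=
  rfl

theorem trace_pureProj {d : ℕ} (ψ : Fin d → ℂ) : trace (pureProj d ψ) = star ψ ⬝ᵥ ψ := by
  rw [pureProj_eq_vecMulVec, trace_vecMulVec, dotProduct_comm]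

theorem mul_pureProj_mul_star {d : ℕ} (U : Matrix (Fin d) (Fin d) ℂ) (ψ : Fin d → ℂ) :
    U * pureProj d ψ * star U = pureProj d (U *ᵥ ψ) := by
  rw [pureProj_eq_vecMulVec, pureProj_eq_vecMulVec, mul_vecMulVec, vecMulVec_mul, star_mulVec,
    star_eq_conjTranspose]

theorem star_mulVec_mulVec_of_mem_unitaryGroup {ι 𝕜 : Type*} [Fintype ι] [DecidableEq ι]
    [RCLike 𝕜] {U : Matrix ι ι 𝕜} (hU : U ∈ unitaryGroup ι 𝕜) (ψ : ι → 𝕜) :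
    star (U *ᵥ ψ) ⬝ᵥ (U *ᵥ ψ) = star ψ ⬝ᵥ ψ := by
  rw [star_mulVec, ← dotProduct_mulVec, mulVec_mulVec, ← star_eq_conjTranspose, hU.1,
    one_mulVec]

theorem exists_mem_unitaryGroup_mulVec_single_eq {ι 𝕜 : Type*} [Fintype ι] [DecidableEq ι]
    [RCLike 𝕜] {ψ : ι → 𝕜} (hψ : star ψ ⬝ᵥ ψ = 1) (k : ι) :
    ∃ V ∈ unitaryGroup ι 𝕜, V *ᵥ Pi.single k 1 = ψ := by
  have hunit : Orthonormal 𝕜 (({k} : Set ι).domRestrict fun _ => WithLp.toLp 2 ψ) := by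
    rw [orthonormal_iff_ite]
    rintro ⟨i, rfl⟩ ⟨j, rfl⟩
    rw [if_pos rfl, Set.domRestrict_apply, EuclideanSpace.inner_eq_star_dotProduct]
    rwa [dotProduct_comm]
  obtain ⟨b, hb⟩ := hunit.exists_orthonormalBasis_extension_of_card_eq (by simp)
  refine ⟨(EuclideanSpace.basisFun ι 𝕜).toBasis.toMatrix b,
    (EuclideanSpace.basisFun ι 𝕜).toMatrix_orthonormalBasis_mem_unitary b, ?_⟩
  ext i
  simp [Module.Basis.toMatrix_apply, hb k rfl]

theorem trace_mul_star_of_mem_unitaryGroup {ι 𝕜 : Type*} [Fintype ι] [DecidableEq ι]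
    [RCLike 𝕜] {U : Matrix ι ι 𝕜} (hU : U ∈ unitaryGroup ι 𝕜) (ρ : Matrix ι ι 𝕜) :
    trace (U * ρ * star U) = trace ρ := by
  rw [trace_mul_cycle, hU.1, one_mul]

theorem mul_depol_mul_star {d : ℕ} (l : ℝ) {U : Matrix (Fin d) (Fin d) ℂ}
    (hU : U ∈ unitaryGroup (Fin d) ℂ) (ρ : Matrix (Fin d) (Fin d) ℂ) :
    U * depol d l ρ * star U = depol d l (U * ρ * star U) := by
  rw [depol, depol, trace_mul_star_of_mem_unitaryGroup hU, mul_add, add_mul]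
  simp only [Matrix.mul_smul, Matrix.smul_mul, Matrix.mul_one, hU.2]

theorem energy_depol {d : ℕ} (l : ℝ) {ρ : Matrix (Fin d) (Fin d) ℂ} (hρ : trace ρ = 1)
    (H : Matrix (Fin d) (Fin d) ℂ) :
    energy (depol d l ρ) H = l * energy ρ H + (1 - l) / d * (trace H).re := by
  rw [energy, energy, depol, hρ, one_smul, add_mul, smul_mul, smul_mul, one_mul, trace_add,
    trace_smul, trace_smul, Complex.add_re, smul_eq_mul, smul_eq_mul, Complex.re_ofReal_mul,
    Complex.re_ofReal_mul]

theorem energy_pureProj_diagonal {d : ℕ} (ψ : Fin d → ℂ) (eps : Fin d → ℝ) :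
    energy (pureProj d ψ) (diagonal fun i => (eps i : ℂ)) = ∑ i, eps i * Complex.normSq (ψ i) := by
  rw [energy, pureProj_eq_vecMulVec, trace, Complex.re_sum]
  refine Finset.sum_congr rfl fun i _ => ?_
  simp only [diag, mul_diagonal, vecMulVec_apply, Pi.star_apply, RCLike.star_def,
    Complex.mul_conj, ← Complex.ofReal_mul, Complex.ofReal_re, mul_comm]

theorem sum_normSq_eq_one {ι : Type*} [Fintype ι] {ψ : ι → ℂ} (hψ : star ψ ⬝ᵥ ψ = 1) :
    ∑ i, Complex.normSq (ψ i) = 1 := by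
  have := congrArg Complex.re hψ
  simpa [dotProduct, Complex.re_sum, Complex.normSq_apply] using this

theorem energy_depol_pureProj_diagonal {d : ℕ} (l : ℝ) {ψ : Fin d → ℂ} (hψ : star ψ ⬝ᵥ ψ = 1)
    (eps : Fin d → ℝ) :
    energy (depol d l (pureProj d ψ)) (diagonal fun i => (eps i : ℂ))
      = l * energy (pureProj d ψ) (diagonal fun i => (eps i : ℂ)) + (1 - l) / d * ∑ i, eps i := by
  rw [energy_depol l (by rw [trace_pureProj, hψ]), trace_diagonal, Complex.re_sum]
  simp only [Complex.ofReal_re]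

theorem energy_pureProj_diagonal_le {d : ℕ} {ψ : Fin d → ℂ} (hψ : star ψ ⬝ᵥ ψ = 1)
    {eps : Fin d → ℝ} {M : ℝ} (hM : ∀ i, eps i ≤ M) :
    energy (pureProj d ψ) (diagonal fun i => (eps i : ℂ)) ≤ M :=
  calc energy (pureProj d ψ) (diagonal fun i => (eps i : ℂ))
      = ∑ i, eps i * Complex.normSq (ψ i) := energy_pureProj_diagonal ψ eps
    _ ≤ ∑ i, M * Complex.normSq (ψ i) :=
      Finset.sum_le_sum fun i _ => mul_le_mul_of_nonneg_right (hM i) (Complex.normSq_nonneg _)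
    _ = M := by rw [← Finset.mul_sum, sum_normSq_eq_one hψ, mul_one]

theorem energy_pureProj_single_diagonal {d : ℕ} (k : Fin d) (eps : Fin d → ℝ) :
    energy (pureProj d (Pi.single k 1)) (diagonal fun i => (eps i : ℂ)) = eps k := by
  simp [energy_pureProj_diagonal, Pi.single_apply]

theorem minEnergy_depol_pureProj_diagonal {d : ℕ} {l : ℝ} (hl : l ≤ 0) {eps : Fin d → ℝ}
    {k : Fin d} (hk : ∀ i, eps i ≤ eps k) {ψ : Fin d → ℂ} (hψ : star ψ ⬝ᵥ ψ = 1) :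
    minEnergy (depol d l (pureProj d ψ)) (diagonal fun i => (eps i : ℂ))
      = l * eps k + (1 - l) / d * ∑ i, eps i := by
  set H : Matrix (Fin d) (Fin d) ℂ := diagonal fun i => (eps i : ℂ)
  have hrotate : ∀ U ∈ unitaryGroup (Fin d) ℂ, energy (U * depol d l (pureProj d ψ) * star U) H
      = l * energy (pureProj d (U *ᵥ ψ)) H + (1 - l) / d * ∑ i, eps i := fun U hU => by
    rw [mul_depol_mul_star l hU, mul_pureProj_mul_star,
      energy_depol_pureProj_diagonal l (by rwa [star_mulVec_mulVec_of_mem_unitaryGroup hU])]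
  refine IsLeast.csInf_eq ⟨?_, ?_⟩
  · obtain ⟨V, hV, hVψ⟩ := exists_mem_unitaryGroup_mulVec_single_eq hψ k
    refine ⟨star V, Unitary.star_mem hV, ?_⟩
    rw [hrotate _ (Unitary.star_mem hV), ← hVψ, mulVec_mulVec, hV.1, one_mulVec,
      energy_pureProj_single_diagonal]
  · rintro _ ⟨U, hU, rfl⟩
    have hUψ : energy (pureProj d (U *ᵥ ψ)) H ≤ eps k :=
      energy_pureProj_diagonal_le (by rwa [star_mulVec_mulVec_of_mem_unitaryGroup hU]) hk
    rw [hrotate U hU]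
    exact add_le_add_left (mul_le_mul_of_nonpos_left hUψ hl) _

theorem ergotropy_depol_pureProj_diagonal {d : ℕ} {l : ℝ} (hl : l ≤ 0) {eps : Fin d → ℝ}
    {k : Fin d} (hk : ∀ i, eps i ≤ eps k) {ψ : Fin d → ℂ} (hψ : star ψ ⬝ᵥ ψ = 1) :
    ergotropy (depol d l (pureProj d ψ)) (diagonal fun i => (eps i : ℂ))
      = -l * (eps k - energy (pureProj d ψ) (diagonal fun i => (eps i : ℂ))) := by
  rw [ergotropy, minEnergy_depol_pureProj_diagonal hl hk hψ, energy_depol_pureProj_diagonal l hψ]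
  ring

theorem depolarizing_output_ergotropy_neg_general (d : ℕ) (hd : 0 < d) (l : ℝ)
    (hl0 : l < 0)
    (eps : Fin d → ℝ) (hmono : Monotone eps)
    (h1 : eps ⟨d - 1, Nat.sub_lt hd Nat.one_pos⟩ = 1)
    (ψ : Fin d → ℂ) (hψ : dotProduct (star ψ) ψ = 1) :
    ergotropy (depol d l (pureProj d ψ)) (Matrix.diagonal fun i => (eps i : ℂ))
      = |l| * (1 - energy (pureProj d ψ) (Matrix.diagonal fun i => (eps i : ℂ))) := by
  have hlast : ∀ i, eps i ≤ eps ⟨d - 1, Nat.sub_lt hd Nat.one_pos⟩ :=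
    fun i => hmono (Nat.le_sub_one_of_lt i.isLt)
  rw [ergotropy_depol_pureProj_diagonal hl0.le hlast hψ, h1, abs_of_neg hl0]

/-- For the depolarizing channel with `λ < 0` applied to a pure state of mean
energy `E` (Hamiltonian eigenvalues `0 = ε₁ ≤ ... ≤ ε_d = 1`), the output
ergotropy equals `|λ|(1 − E)`. -/
theorem depolarizing_output_ergotropy_neg (d : ℕ) (hd : 0 < d) (l : ℝ)
    (hlb : -1 / ((d:ℝ)^2 - 1) ≤ l) (hl0 : l < 0)
    (eps : Fin d → ℝ) (hmono : Monotone eps)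
    (h0 : eps ⟨0, hd⟩ = 0) (h1 : eps ⟨d - 1, Nat.sub_lt hd Nat.one_pos⟩ = 1)
    (ψ : Fin d → ℂ) (hψ : dotProduct (star ψ) ψ = 1) :
    ergotropy (depol d l (pureProj d ψ)) (Matrix.diagonal fun i => (eps i : ℂ))
      = |l| * (1 - energy (pureProj d ψ) (Matrix.diagonal fun i => (eps i : ℂ))) :=
  depolarizing_output_ergotropy_neg_general d hd l hl0 eps hmono h1 ψ hψ
end

section
/- Let ℰ⁽ⁿ⁾(Δ_κ; E) denote the maximal output ergotropy over n-qubit input states of energy at most E under Δ_κ^⊗n. Then for every n ≥ 1 and E ∈ [0,n]: E ≥ ℰ⁽ⁿ⁾(Δ_κ; E) ≥ E − 1. Consequently lim_{n→∞} ℰ⁽ⁿ⁾(Δ_κ; n𝔢)/n = 𝔢 for every 𝔢 ∈ [0,1]. -/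
open Matrix BigOperators

open scoped ComplexOrder

/-- The `n`-qubit Hamiltonian `H⁽ⁿ⁾ = Σⱼ |1⟩⟨1|ⱼ`, diagonal in the computational
basis with entry the number of excited sites. -/
noncomputable def Hn (n : ℕ) :
    Matrix (Fin n → Fin 2) (Fin n → Fin 2) ℂ :=
  Matrix.diagonal fun f => ((∑ j, ((f j : ℕ) : ℝ) : ℝ) : ℂ)

/-- The `n`-fold tensor product `Δ_κ^⊗n` of the qubit dephasing channel: it
multiplies the matrix element between computational basis states `i, j` by
`√(1−κ)` raised to the number of sites where `i` and `j` differ. -/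
noncomputable def dephN (n : ℕ) (κ : ℝ)
    (M : Matrix (Fin n → Fin 2) (Fin n → Fin 2) ℂ) :
    Matrix (Fin n → Fin 2) (Fin n → Fin 2) ℂ :=
  Matrix.of fun i j =>
    ((Real.sqrt (1 - κ) ^ (Finset.univ.filter fun s => i s ≠ j s).card : ℝ) : ℂ) * M i j

/-- `ℰ⁽ⁿ⁾(Δ_κ;E)`: the maximal output ergotropy over `n`-qubit states of
energy at most `E` under `Δ_κ^⊗n`. -/
noncomputable def maxErgo (n : ℕ) (κ E : ℝ) : ℝ :=
  sSup {y : ℝ | ∃ σ : Matrix (Fin n → Fin 2) (Fin n → Fin 2) ℂ,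
    σ.PosSemidef ∧ σ.trace = 1 ∧ energy σ (Hn n) ≤ E ∧
    y = ergotropy (dephN n κ σ) (Hn n)}

/-!
The upper bound holds because dephasing is a positive map (a Schur product with the kernel
`√(1-κ) ^ hammingDist i j`, which is the tensor power of a positive `2 × 2` matrix) that leaves
diagonal entries, hence the energy, unchanged; ergotropy never exceeds energy for a positive
Hamiltonian. For the lower bound take the computational basis state with `⌊E⌋` excited qubits:
it is diagonal, so dephasing fixes it, and a permutation unitary moves it to the ground state,
so its ergotropy is its whole energy `⌊E⌋ > E - 1`. Dividing by `n` squeezes `ℰ⁽ⁿ⁾(n𝔢)/n` to `𝔢`.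
-/

lemma posSemidef_diagonal_single {ι : Type*} [DecidableEq ι] (f : ι) :
    (diagonal (Pi.single f (1 : ℂ))).PosSemidef :=
  posSemidef_diagonal_iff.mpr fun i => by by_cases h : i = f <;> simp [h]

section Ergotropy

variable {ι : Type*} [Fintype ι]

lemma energy_diagonal [DecidableEq ι] (ρ : Matrix ι ι ℂ) (d : ι → ℝ) :
    energy ρ (diagonal fun i => (d i : ℂ)) = ∑ i, (ρ i i).re * d i := by
  simp [energy, trace, mul_diagonal, Complex.re_sum]

open scoped MatrixOrder in
lemma energy_nonneg {ρ H : Matrix ι ι ℂ} (hρ : ρ.PosSemidef) (hH : H.PosSemidef) :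
    0 ≤ energy ρ H := by
  classical
  obtain ⟨B, rfl⟩ := CStarAlgebra.nonneg_iff_eq_star_mul_self.mp hH.nonneg
  rw [energy, ← mul_assoc, trace_mul_comm, ← mul_assoc]
  exact (Complex.nonneg_iff.mp (hρ.mul_mul_conjTranspose_same B).trace_nonneg).1

variable [DecidableEq ι]

lemma minEnergy_nonneg {ρ H : Matrix ι ι ℂ} (hρ : ρ.PosSemidef) (hH : H.PosSemidef) :
    0 ≤ minEnergy ρ H :=
  Real.sInf_nonneg <| by
    rintro _ ⟨U, -, rfl⟩
    exact energy_nonneg (by simpa [star_eq_conjTranspose] using hρ.mul_mul_conjTranspose_same U) hH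

lemma minEnergy_le {ρ H U : Matrix ι ι ℂ} (hρ : ρ.PosSemidef) (hH : H.PosSemidef)
    (hU : U ∈ unitaryGroup ι ℂ) : minEnergy ρ H ≤ energy (U * ρ * star U) H := by
  refine csInf_le ⟨0, ?_⟩ ⟨U, hU, rfl⟩
  rintro _ ⟨V, -, rfl⟩
  exact energy_nonneg (by simpa [star_eq_conjTranspose] using hρ.mul_mul_conjTranspose_same V) hH

lemma ergotropy_le_energy {ρ H : Matrix ι ι ℂ} (hρ : ρ.PosSemidef) (hH : H.PosSemidef) :
    ergotropy ρ H ≤ energy ρ H :=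
  sub_le_self _ (minEnergy_nonneg hρ hH)

lemma permMatrix_mem_unitaryGroup (σ : Equiv.Perm ι) : σ.permMatrix ℂ ∈ unitaryGroup ι ℂ := by
  rw [mem_unitaryGroup_iff, star_eq_conjTranspose, conjTranspose_permMatrix, ← permMatrix_mul,
    inv_mul_cancel, permMatrix_one]

lemma permMatrix_mul_mul_star (σ : Equiv.Perm ι) (M : Matrix ι ι ℂ) :
    σ.permMatrix ℂ * M * star (σ.permMatrix ℂ) = M.submatrix σ σ := by
  rw [star_eq_conjTranspose, conjTranspose_permMatrix, Equiv.Perm.permMatrix,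
    Equiv.Perm.permMatrix, PEquiv.toMatrix_toPEquiv_mul, PEquiv.mul_toMatrix_toPEquiv]
  rfl

lemma energy_diagonal_single (f : ι) (d : ι → ℝ) :
    energy (diagonal (Pi.single f 1)) (diagonal fun i => (d i : ℂ)) = d f := by
  simp [energy_diagonal, Pi.single_apply, apply_ite Complex.re]

lemma ergotropy_diagonal_single {d : ι → ℝ} (hd : ∀ i, 0 ≤ d i) {g : ι} (hg : d g = 0) (f : ι) :
    ergotropy (diagonal (Pi.single f 1)) (diagonal fun i => (d i : ℂ)) = d f := by
  have hH : (diagonal fun i => (d i : ℂ)).PosSemidef :=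
    posSemidef_diagonal_iff.mpr fun i => by exact_mod_cast hd i
  have hρ := posSemidef_diagonal_single f
  have hmin : minEnergy (diagonal (Pi.single f 1)) (diagonal fun i => (d i : ℂ)) ≤ 0 :=
    calc _ ≤ _ := minEnergy_le hρ hH (permMatrix_mem_unitaryGroup (Equiv.swap f g))
      _ = d g := by
        rw [permMatrix_mul_mul_star, submatrix_diagonal_equiv, Pi.single_comp_equiv,
          Equiv.symm_swap, Equiv.swap_apply_left, energy_diagonal_single]
      _ = 0 := hg
  rw [ergotropy, energy_diagonal_single, le_antisymm hmin (minEnergy_nonneg hρ hH), sub_zero]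

end Ergotropy

section Dephasing

variable {ι β : Type*} [Fintype ι] [Fintype β]

open scoped MatrixOrder in
lemma Matrix.PosSemidef.piKronecker {k : Matrix β β ℂ} (hk : k.PosSemidef) :
    (of fun i j : ι → β => ∏ t, k (i t) (j t)).PosSemidef := by
  classical
  obtain ⟨W, rfl⟩ := CStarAlgebra.nonneg_iff_eq_star_mul_self.mp hk.nonneg
  let B : Matrix (ι → β) (ι → β) ℂ := of fun x i => ∏ t, W (x t) (i t)
  convert posSemidef_conjTranspose_mul_self B using 1
  ext i j
  simp only [of_apply, mul_apply, star_eq_conjTranspose, conjTranspose_apply, B, Fintype.prod_sum,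
    star_prod, Finset.prod_mul_distrib]

lemma posSemidef_pow_hammingDist [DecidableEq β] {c : ℝ} (hc0 : 0 ≤ c) (hc1 : c ≤ 1) :
    (of fun i j : ι → β => ((c ^ hammingDist i j : ℝ) : ℂ)).PosSemidef := by
  let k : Matrix β β ℂ := of fun a b => if a = b then 1 else (c : ℂ)
  have hk : k.PosSemidef := by
    have : k = ((1 - c : ℝ) : ℂ) • 1 + (c : ℂ) • vecMulVec 1 (star 1) := by
      ext a b; by_cases h : a = b <;> simp [k, h, one_apply]
    rw [this]
    exact (PosSemidef.one.smul (by exact_mod_cast sub_nonneg.mpr hc1)).add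
      ((posSemidef_vecMulVec_self_star 1).smul (by exact_mod_cast hc0))
  convert hk.piKronecker (ι := ι) using 1
  ext i j
  simp only [of_apply, k, hammingDist, Finset.prod_ite, Finset.prod_const_one, one_mul,
    Finset.prod_const]
  push_cast
  rfl

end Dephasing

lemma dephN_eq_hadamard (n : ℕ) (κ : ℝ) (σ : Matrix (Fin n → Fin 2) (Fin n → Fin 2) ℂ) :
    dephN n κ σ = (of fun i j => ((√(1 - κ) ^ hammingDist i j : ℝ) : ℂ)) ⊙ σ :=
  rfl

lemma Matrix.PosSemidef.dephN {n : ℕ} {κ : ℝ} (hκ : 0 ≤ κ)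
    {σ : Matrix (Fin n → Fin 2) (Fin n → Fin 2) ℂ} (hσ : σ.PosSemidef) :
    (dephN n κ σ).PosSemidef := by
  rw [dephN_eq_hadamard]
  exact (posSemidef_pow_hammingDist (Real.sqrt_nonneg _)
    (Real.sqrt_le_one.mpr (by linarith))).hadamard hσ

lemma dephN_apply_self (n : ℕ) (κ : ℝ) (σ : Matrix (Fin n → Fin 2) (Fin n → Fin 2) ℂ)
    (i : Fin n → Fin 2) : dephN n κ σ i i = σ i i := by
  simp [dephN]

lemma dephN_diagonal (n : ℕ) (κ : ℝ) (v : (Fin n → Fin 2) → ℂ) :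
    dephN n κ (diagonal v) = diagonal v := by
  ext i j
  rcases eq_or_ne i j with rfl | h
  · exact dephN_apply_self n κ _ i
  · simp [dephN, h]

lemma posSemidef_Hn (n : ℕ) : (Hn n).PosSemidef :=
  posSemidef_diagonal_iff.mpr fun f => by norm_cast; positivity

lemma energy_dephN_Hn (n : ℕ) (κ : ℝ) (σ : Matrix (Fin n → Fin 2) (Fin n → Fin 2) ℂ) :
    energy (dephN n κ σ) (Hn n) = energy σ (Hn n) := by
  simp only [Hn, energy_diagonal, dephN_apply_self]

lemma ergotropy_dephN_Hn_diagonal_single (n : ℕ) (κ : ℝ) (f : Fin n → Fin 2) :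
    ergotropy (dephN n κ (diagonal (Pi.single f 1))) (Hn n) = ∑ j, ((f j : ℕ) : ℝ) := by
  rw [dephN_diagonal, Hn]
  exact ergotropy_diagonal_single (d := fun f : Fin n → Fin 2 => ∑ j, ((f j : ℕ) : ℝ))
    (fun _ => by positivity) (g := 0) (by simp) f

def excitedBasis (n m : ℕ) : Fin n → Fin 2 := fun j => if (j : ℕ) < m then 1 else 0

lemma sum_excitedBasis {n m : ℕ} (hm : m ≤ n) : ∑ j, ((excitedBasis n m j : ℕ) : ℝ) = m := by
  simp [excitedBasis, apply_ite, Finset.sum_boole, Fin.card_filter_val_lt, hm]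
lemma ergotropy_dephN_Hn_le_energy {n : ℕ} {κ : ℝ} (hκ : 0 ≤ κ)
    {σ : Matrix (Fin n → Fin 2) (Fin n → Fin 2) ℂ} (hσ : σ.PosSemidef) :
    ergotropy (dephN n κ σ) (Hn n) ≤ energy σ (Hn n) :=
  energy_dephN_Hn n κ σ ▸ ergotropy_le_energy (hσ.dephN hκ) (posSemidef_Hn n)

lemma maxErgo_le {n : ℕ} {κ E : ℝ} (hκ : 0 ≤ κ) (hE : 0 ≤ E) : maxErgo n κ E ≤ E :=
  Real.sSup_le (fun _ ⟨_, hσ, _, hσE, hy⟩ => hy ▸ (ergotropy_dephN_Hn_le_energy hκ hσ).trans hσE) hE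

lemma le_maxErgo {n : ℕ} {κ E : ℝ} (hκ : 0 ≤ κ) {σ : Matrix (Fin n → Fin 2) (Fin n → Fin 2) ℂ}
    (hσ : σ.PosSemidef) (htr : σ.trace = 1) (hσE : energy σ (Hn n) ≤ E) :
    ergotropy (dephN n κ σ) (Hn n) ≤ maxErgo n κ E :=
  le_csSup ⟨E, fun _ ⟨_, hτ, _, hτE, hy⟩ => hy ▸ (ergotropy_dephN_Hn_le_energy hκ hτ).trans hτE⟩
    ⟨σ, hσ, htr, hσE, rfl⟩

lemma natFloor_le_maxErgo {n : ℕ} {κ E : ℝ} (hκ : 0 ≤ κ) (hE0 : 0 ≤ E) (hEn : E ≤ n) :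
    (⌊E⌋₊ : ℝ) ≤ maxErgo n κ E := by
  have hm : ⌊E⌋₊ ≤ n := Nat.floor_le_of_le hEn
  set f := excitedBasis n ⌊E⌋₊
  have henergy : energy (diagonal (Pi.single f 1)) (Hn n) ≤ E := by
    rw [Hn, energy_diagonal_single, sum_excitedBasis hm]
    exact Nat.floor_le hE0
  calc (⌊E⌋₊ : ℝ) = ergotropy (dephN n κ (diagonal (Pi.single f 1))) (Hn n) := by
        rw [ergotropy_dephN_Hn_diagonal_single, sum_excitedBasis hm]
    _ ≤ maxErgo n κ E :=
        le_maxErgo hκ (posSemidef_diagonal_single f) (by simp [trace_diagonal]) henergy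

lemma tendsto_div_natCast_of_abs_sub_le {a : ℕ → ℝ} {e C : ℝ} (h : ∀ n : ℕ, |a n - n * e| ≤ C) :
    Filter.Tendsto (fun n : ℕ => a n / n) Filter.atTop (nhds e) := by
  rw [tendsto_iff_norm_sub_tendsto_zero]
  refine squeeze_zero' (.of_forall fun _ => norm_nonneg _) ?_
    (tendsto_const_div_atTop_nhds_zero_nat C)
  filter_upwards [Filter.eventually_gt_atTop 0] with n hn
  have hn' : (0 : ℝ) < n := Nat.cast_pos.mpr hn
  calc ‖a n / n - e‖ = |a n - n * e| / n := by
        rw [Real.norm_eq_abs, div_sub' hn'.ne', abs_div, abs_of_pos hn', mul_comm]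
    _ ≤ C / n := by gcongr; exact h n

/-- For every `n ≥ 1` and `E ∈ [0,n]`, `E ≥ ℰ⁽ⁿ⁾(Δ_κ;E) ≥ E − 1`; consequently
`ℰ⁽ⁿ⁾(Δ_κ;n𝔢)/n → 𝔢` as `n → ∞` for every `𝔢 ∈ [0,1]`. -/
theorem dephasing_maxErgo_bounds_and_capacitance (κ : ℝ) (hκ : κ ∈ Set.Icc (0:ℝ) 1) :
    (∀ n : ℕ, 1 ≤ n → ∀ E : ℝ, 0 ≤ E → E ≤ n →
      maxErgo n κ E ≤ E ∧ E - 1 ≤ maxErgo n κ E) ∧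
    (∀ e : ℝ, e ∈ Set.Icc (0:ℝ) 1 →
      Filter.Tendsto (fun n : ℕ => maxErgo n κ (n * e) / n)
        Filter.atTop (nhds e)) := by
  have bounds : ∀ n : ℕ, ∀ E : ℝ, 0 ≤ E → E ≤ n →
      maxErgo n κ E ≤ E ∧ E - 1 ≤ maxErgo n κ E := fun n E hE0 hEn =>
    ⟨maxErgo_le hκ.1 hE0, by
      linarith [Nat.lt_floor_add_one E, natFloor_le_maxErgo (n := n) hκ.1 hE0 hEn]⟩
  refine ⟨fun n _ => bounds n, fun e ⟨he0, he1⟩ => ?_⟩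
  refine tendsto_div_natCast_of_abs_sub_le (C := 1) fun n => abs_le.mpr ?_
  obtain ⟨hle, hge⟩ := bounds n (n * e) (by positivity) (mul_le_of_le_one_right n.cast_nonneg he1)
  constructor <;> linarith
end
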